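/- arXiv:nlin/0412003 — 2 statements merged into one kernel-verified Lean document; each statement's English description precedes it below -/
import Mathlib

section
/- Let n be a positive integer, and let 𝟏 denote the n×n identity matrix. Suppose e₁,…,e_N are n×n real matrices satisfying eᵢeⱼ + eⱼeᵢ = -2δᵢⱼ𝟏 for all i,j. Let u : ℝ × ℝ → ℝ and U : ℝ × ℝ → ℝ^N be smooth solutions of the system u_t = u_{xxx} + 6uu_x - 6⟨U,U_x⟩ and U_t = U_{xxx} + 6u_x U + 6uU_x. Then the matrix-valued function Q := u·𝟏 + Σ_{j=1}^{N} U_j · e_j satisfies the matrix KdV equation Q_t = Q_{xxx} + 3(Q²)_x. -/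
noncomputable section

/-- partial derivative in the first (space) variable -/
def pdx (f : ℝ → ℝ → ℝ) : ℝ → ℝ → ℝ := fun x t => deriv (fun y => f y t) x

/-- partial derivative in the second (time) variable -/
def pdt (f : ℝ → ℝ → ℝ) : ℝ → ℝ → ℝ := fun x t => deriv (fun s => f x s) t

/-- smoothness of a function of two real variables -/
def smooth2 (f : ℝ → ℝ → ℝ) : Prop := ContDiff ℝ (⊤ : ℕ∞) (fun p : ℝ × ℝ => f p.1 p.2)

/-- componentwise partial x-derivative of a vector-valued function -/
def pdxV {N : ℕ} (U : ℝ → ℝ → Fin N → ℝ) : ℝ → ℝ → Fin N → ℝ :=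
  fun x t i => deriv (fun y => U y t i) x

/-- componentwise partial t-derivative of a vector-valued function -/
def pdtV {N : ℕ} (U : ℝ → ℝ → Fin N → ℝ) : ℝ → ℝ → Fin N → ℝ :=
  fun x t i => deriv (fun s => U x s i) t

/-- pointwise Euclidean inner product of two vector-valued functions -/
def ip {N : ℕ} (A B : ℝ → ℝ → Fin N → ℝ) : ℝ → ℝ → ℝ :=
  fun x t => ∑ i, A x t i * B x t i

/-- componentwise smoothness of a vector-valued function of two real variables -/
def smooth2V {N : ℕ} (U : ℝ → ℝ → Fin N → ℝ) : Prop :=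
  ∀ i, ContDiff ℝ (⊤ : ℕ∞) (fun p : ℝ × ℝ => U p.1 p.2 i)


/-- entrywise partial x-derivative of a matrix-valued function -/
def pdxM {n : ℕ} (Q : ℝ → ℝ → Matrix (Fin n) (Fin n) ℝ) : ℝ → ℝ → Matrix (Fin n) (Fin n) ℝ :=
  fun x t => Matrix.of fun i j => deriv (fun y => Q y t i j) x

/-- entrywise partial t-derivative of a matrix-valued function -/
def pdtM {n : ℕ} (Q : ℝ → ℝ → Matrix (Fin n) (Fin n) ℝ) : ℝ → ℝ → Matrix (Fin n) (Fin n) ℝ :=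
  fun x t => Matrix.of fun i j => deriv (fun s => Q x s i j) t

/- ------------------ auxiliary lemmas ------------------ -/

lemma smooth2_hasDerivAt_x {u : ℝ → ℝ → ℝ} (hu : smooth2 u) (x t : ℝ) :
    HasDerivAt (fun y => u y t) (pdx u x t) x := by
  have h : DifferentiableAt ℝ (fun y => u y t) x := by
    have heq : (fun y => u y t) = (fun p : ℝ × ℝ => u p.1 p.2) ∘ (fun y => (y, t)) := rfl
    rw [heq]
    exact DifferentiableAt.comp x ((hu.differentiable (by simp)) (x, t))
      (differentiableAt_id.prodMk (differentiableAt_const t))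
  exact h.hasDerivAt

lemma smooth2_hasDerivAt_t {u : ℝ → ℝ → ℝ} (hu : smooth2 u) (x t : ℝ) :
    HasDerivAt (fun s => u x s) (pdt u x t) t := by
  have h : DifferentiableAt ℝ (fun s => u x s) t := by
    have heq : (fun s => u x s) = (fun p : ℝ × ℝ => u p.1 p.2) ∘ (fun s => (x, s)) := rfl
    rw [heq]
    exact DifferentiableAt.comp t ((hu.differentiable (by simp)) (x, t))
      ((differentiableAt_const x).prodMk differentiableAt_id)
  exact h.hasDerivAt

lemma smooth2_pdx {u : ℝ → ℝ → ℝ} (hu : smooth2 u) : smooth2 (pdx u) := by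
  have key : ∀ x t : ℝ, pdx u x t
      = fderiv ℝ (fun p : ℝ × ℝ => u p.1 p.2) (x, t) ((1:ℝ), (0:ℝ)) := by
    intro x t
    have h1 : HasFDerivAt (fun p : ℝ × ℝ => u p.1 p.2)
        (fderiv ℝ (fun p : ℝ × ℝ => u p.1 p.2) (x, t)) (x, t) :=
      ((hu.differentiable (by simp)) (x, t)).hasFDerivAt
    have h2 : HasDerivAt (fun y : ℝ => (y, t)) ((1 : ℝ), (0 : ℝ)) x :=
      (hasDerivAt_id x).prodMk (hasDerivAt_const x t)
    exact (h1.comp_hasDerivAt x h2).deriv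
  have h : ContDiff ℝ (⊤ : ℕ∞) (fun p : ℝ × ℝ =>
      fderiv ℝ (fun q : ℝ × ℝ => u q.1 q.2) p ((1 : ℝ), (0 : ℝ))) :=
    (hu.fderiv_right (by simp)).clm_apply contDiff_const
  have heq : (fun p : ℝ × ℝ => pdx u p.1 p.2) = fun p : ℝ × ℝ =>
      fderiv ℝ (fun q : ℝ × ℝ => u q.1 q.2) p ((1:ℝ), (0:ℝ)) := by
    funext p; exact key p.1 p.2
  show ContDiff ℝ (⊤ : ℕ∞) (fun p : ℝ × ℝ => pdx u p.1 p.2)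
  rw [heq]; exact h

lemma smooth2V_pdxV {N : ℕ} {U : ℝ → ℝ → Fin N → ℝ} (hU : smooth2V U) :
    smooth2V (pdxV U) := fun i => smooth2_pdx (u := fun x t => U x t i) (hU i)

lemma pdxV_hasDerivAt {N : ℕ} {U : ℝ → ℝ → Fin N → ℝ} (hU : smooth2V U) (x t : ℝ)
    (k : Fin N) : HasDerivAt (fun y => U y t k) (pdxV U x t k) x :=
  smooth2_hasDerivAt_x (u := fun x t => U x t k) (hU k) x t

lemma pdtV_hasDerivAt {N : ℕ} {U : ℝ → ℝ → Fin N → ℝ} (hU : smooth2V U) (x t : ℝ)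
    (k : Fin N) : HasDerivAt (fun s => U x s k) (pdtV U x t k) t :=
  smooth2_hasDerivAt_t (u := fun x t => U x t k) (hU k) x t

/-- the basic combination `a•1 + ∑ Vⱼ•eⱼ` -/
def comb {n N : ℕ} (e : Fin N → Matrix (Fin n) (Fin n) ℝ) (a : ℝ → ℝ → ℝ)
    (V : ℝ → ℝ → Fin N → ℝ) : ℝ → ℝ → Matrix (Fin n) (Fin n) ℝ :=
  fun x t => a x t • (1 : Matrix (Fin n) (Fin n) ℝ) + ∑ j, V x t j • e j

lemma comb_entry {n N : ℕ} (e : Fin N → Matrix (Fin n) (Fin n) ℝ) (a : ℝ → ℝ → ℝ)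
    (V : ℝ → ℝ → Fin N → ℝ) (x t : ℝ) (i j : Fin n) :
    comb e a V x t i j
      = a x t * (1 : Matrix (Fin n) (Fin n) ℝ) i j + ∑ k, V x t k * e k i j := by
  simp [comb, Matrix.add_apply, Matrix.smul_apply, Matrix.sum_apply, smul_eq_mul]

lemma pdxM_comb {n N : ℕ} (e : Fin N → Matrix (Fin n) (Fin n) ℝ) (a : ℝ → ℝ → ℝ)
    (V : ℝ → ℝ → Fin N → ℝ) (ha : smooth2 a) (hV : smooth2V V) :
    pdxM (comb e a V) = comb e (pdx a) (pdxV V) := by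
  funext x t
  ext i j
  have h1 : HasDerivAt (fun y => a y t) (pdx a x t) x := smooth2_hasDerivAt_x ha x t
  have h : HasDerivAt (fun y => (comb e a V) y t i j)
      (pdx a x t * (1 : Matrix (Fin n) (Fin n) ℝ) i j + ∑ k, pdxV V x t k * e k i j) x := by
    have hh : HasDerivAt
        (fun y => a y t * (1 : Matrix (Fin n) (Fin n) ℝ) i j + ∑ k, V y t k * e k i j)
        (pdx a x t * (1 : Matrix (Fin n) (Fin n) ℝ) i j + ∑ k, pdxV V x t k * e k i j) x :=
      (h1.mul_const ((1 : Matrix (Fin n) (Fin n) ℝ) i j)).add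
        (HasDerivAt.fun_sum (fun k _ => (pdxV_hasDerivAt hV x t k).mul_const (e k i j)))
    have hfun : (fun y => (comb e a V) y t i j)
        = fun y => a y t * (1 : Matrix (Fin n) (Fin n) ℝ) i j + ∑ k, V y t k * e k i j := by
      funext y; exact comb_entry e a V y t i j
    rw [hfun]; exact hh
  show deriv (fun y => (comb e a V) y t i j) x = _
  rw [h.deriv, comb_entry]

lemma pdtM_comb {n N : ℕ} (e : Fin N → Matrix (Fin n) (Fin n) ℝ) (a : ℝ → ℝ → ℝ)
    (V : ℝ → ℝ → Fin N → ℝ) (ha : smooth2 a) (hV : smooth2V V) :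
    pdtM (comb e a V) = comb e (pdt a) (pdtV V) := by
  funext x t
  ext i j
  have h1 : HasDerivAt (fun s => a x s) (pdt a x t) t := smooth2_hasDerivAt_t ha x t
  have h : HasDerivAt (fun s => (comb e a V) x s i j)
      (pdt a x t * (1 : Matrix (Fin n) (Fin n) ℝ) i j + ∑ k, pdtV V x t k * e k i j) t := by
    have hh : HasDerivAt
        (fun s => a x s * (1 : Matrix (Fin n) (Fin n) ℝ) i j + ∑ k, V x s k * e k i j)
        (pdt a x t * (1 : Matrix (Fin n) (Fin n) ℝ) i j + ∑ k, pdtV V x t k * e k i j) t :=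
      (h1.mul_const ((1 : Matrix (Fin n) (Fin n) ℝ) i j)).add
        (HasDerivAt.fun_sum (fun k _ => (pdtV_hasDerivAt hV x t k).mul_const (e k i j)))
    have hfun : (fun s => (comb e a V) x s i j)
        = fun s => a x s * (1 : Matrix (Fin n) (Fin n) ℝ) i j + ∑ k, V x s k * e k i j := by
      funext s; exact comb_entry e a V x s i j
    rw [hfun]; exact hh
  show deriv (fun s => (comb e a V) x s i j) t = _
  rw [h.deriv, comb_entry]

lemma comb_sq {n N : ℕ} (e : Fin N → Matrix (Fin n) (Fin n) ℝ)
    (he : ∀ i j, e i * e j + e j * e i =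
      if i = j then (-2 : ℝ) • (1 : Matrix (Fin n) (Fin n) ℝ) else 0)
    (a : ℝ) (V : Fin N → ℝ) :
    (a • (1 : Matrix (Fin n) (Fin n) ℝ) + ∑ j, V j • e j)
      * (a • (1 : Matrix (Fin n) (Fin n) ℝ) + ∑ j, V j • e j)
      = (a * a - ∑ j, V j * V j) • (1 : Matrix (Fin n) (Fin n) ℝ)
        + ∑ j, (2 * a * V j) • e j := by
  have hdouble : (∑ j, ∑ k, (V j * V k) • (e j * e k))
      = (-(∑ j, V j * V j)) • (1 : Matrix (Fin n) (Fin n) ℝ) := by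
    have hsymm : (∑ j, ∑ k, (V j * V k) • (e j * e k))
        = ∑ j, ∑ k, (V j * V k) • (e k * e j) := by
      rw [Finset.sum_comm]
      apply Finset.sum_congr rfl; intro j _
      apply Finset.sum_congr rfl; intro k _
      rw [mul_comm (V k) (V j)]
    have h2 : (2 : ℝ) • (∑ j, ∑ k, (V j * V k) • (e j * e k))
        = (2 : ℝ) • ((-(∑ j, V j * V j)) • (1 : Matrix (Fin n) (Fin n) ℝ)) := by
      rw [two_smul, two_smul]
      nth_rewrite 2 [hsymm]
      rw [← Finset.sum_add_distrib]
      have : ∀ j : Fin N, ((∑ k, (V j * V k) • (e j * e k)) + ∑ k, (V j * V k) • (e k * e j))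
          = (V j * V j) • ((-2 : ℝ) • (1 : Matrix (Fin n) (Fin n) ℝ)) := by
        intro j
        rw [← Finset.sum_add_distrib]
        have : ∀ k : Fin N, ((V j * V k) • (e j * e k) + (V j * V k) • (e k * e j))
            = (V j * V k) • (if j = k then (-2 : ℝ) • (1 : Matrix (Fin n) (Fin n) ℝ) else 0) := by
          intro k; rw [← smul_add, he j k]
        rw [Finset.sum_congr rfl fun k _ => this k]
        simp
      rw [Finset.sum_congr rfl fun j _ => this j]
      simp only [smul_smul]
      rw [← Finset.sum_smul, ← add_smul]
      congr 1
      rw [← Finset.sum_mul]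
      ring
    exact smul_right_injective (Matrix (Fin n) (Fin n) ℝ) (by norm_num : (2:ℝ) ≠ 0) h2
  have e1 : (a • (1 : Matrix (Fin n) (Fin n) ℝ)) * (a • (1 : Matrix (Fin n) (Fin n) ℝ))
      = (a * a) • (1 : Matrix (Fin n) (Fin n) ℝ) := by
    rw [smul_mul_smul_comm, one_mul]
  have e2 : (a • (1 : Matrix (Fin n) (Fin n) ℝ)) * (∑ j, V j • e j)
      = ∑ j, (a * V j) • e j := by
    rw [Finset.mul_sum]
    exact Finset.sum_congr rfl fun k _ => by rw [smul_mul_smul_comm, one_mul]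
  have e3 : (∑ j, V j • e j) * (a • (1 : Matrix (Fin n) (Fin n) ℝ))
      = ∑ j, (a * V j) • e j := by
    rw [Finset.sum_mul]
    exact Finset.sum_congr rfl fun k _ => by rw [smul_mul_smul_comm, mul_one, mul_comm]
  have e4 : (∑ j, V j • e j) * (∑ j, V j • e j)
      = (-(∑ j, V j * V j)) • (1 : Matrix (Fin n) (Fin n) ℝ) := by
    rw [← hdouble, Finset.sum_mul]
    apply Finset.sum_congr rfl; intro j _
    rw [Finset.mul_sum]
    exact Finset.sum_congr rfl fun k _ => by rw [smul_mul_smul_comm]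
  have hYY : (∑ j, (a * V j) • e j) + (∑ j, (a * V j) • e j)
      = ∑ j, (2 * a * V j) • e j := by
    rw [← Finset.sum_add_distrib]
    exact Finset.sum_congr rfl fun k _ => by rw [← add_smul]; congr 1; ring
  rw [add_mul, mul_add, mul_add, e1, e2, e3, e4]
  rw [sub_smul, sub_eq_add_neg, ← neg_smul, ← hYY]
  abel

/-- the Jordan KdV system reduces to the matrix KdV equation
    `Q_t = Q_xxx + 3(Q²)_x` via `Q = u·𝟏 + Σ Uⱼ eⱼ` with anticommuting `eⱼ`. -/
theorem stmt_7 {n N : ℕ} (hn : 0 < n) (e : Fin N → Matrix (Fin n) (Fin n) ℝ)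
    (he : ∀ i j, e i * e j + e j * e i =
      if i = j then (-2 : ℝ) • (1 : Matrix (Fin n) (Fin n) ℝ) else 0)
    (u : ℝ → ℝ → ℝ) (U : ℝ → ℝ → Fin N → ℝ)
    (hu : smooth2 u) (hU : smooth2V U)
    (heq1 : ∀ x t, pdt u x t = pdx (pdx (pdx u)) x t
      + 6 * u x t * pdx u x t - 6 * ip U (pdxV U) x t)
    (heq2 : ∀ x t i, pdtV U x t i = pdxV (pdxV (pdxV U)) x t i
      + 6 * pdx u x t * U x t i + 6 * u x t * pdxV U x t i)
    (Q : ℝ → ℝ → Matrix (Fin n) (Fin n) ℝ)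
    (hQ : ∀ x t, Q x t = u x t • (1 : Matrix (Fin n) (Fin n) ℝ) + ∑ j, U x t j • e j) :
    ∀ x t, pdtM Q x t = pdxM (pdxM (pdxM Q)) x t
      + (3 : ℝ) • pdxM (fun x t => Q x t * Q x t) x t := by
  have hQc : Q = comb e u U := by
    funext x t; exact hQ x t
  -- coefficient functions of Q²
  set A : ℝ → ℝ → ℝ := fun x t => u x t * u x t - ∑ j, U x t j * U x t j with hA_def
  set B : ℝ → ℝ → Fin N → ℝ := fun x t j => 2 * u x t * U x t j with hB_def
  have hAsm : smooth2 A := (hu.mul hu).sub (ContDiff.sum fun i _ => (hU i).mul (hU i))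
  have hBsm : smooth2V B := fun j => (contDiff_const.mul hu).mul (hU j)
  have hQQ : (fun x t => Q x t * Q x t) = comb e A B := by
    funext x t
    rw [hQ x t]
    exact comb_sq e he (u x t) (U x t)
  -- derivative of A
  have hA : ∀ x t, pdx A x t = 2 * u x t * pdx u x t - 2 * ip U (pdxV U) x t := by
    intro x t
    have h1 := smooth2_hasDerivAt_x hu x t
    have h : HasDerivAt (fun y => A y t)
        (pdx u x t * u x t + u x t * pdx u x t
          - ∑ j, (pdxV U x t j * U x t j + U x t j * pdxV U x t j)) x :=
      (h1.mul h1).sub (HasDerivAt.fun_sum fun k _ =>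
        (pdxV_hasDerivAt hU x t k).mul (pdxV_hasDerivAt hU x t k))
    have : pdx A x t = _ := h.deriv
    rw [this]
    simp only [ip, Finset.sum_add_distrib]
    rw [Finset.sum_congr rfl fun k (_ : k ∈ Finset.univ) => mul_comm (pdxV U x t k) (U x t k)]
    ring
  -- derivative of B
  have hB : ∀ x t k, pdxV B x t k
      = 2 * pdx u x t * U x t k + 2 * u x t * pdxV U x t k := by
    intro x t k
    have h1 := smooth2_hasDerivAt_x hu x t
    have h : HasDerivAt (fun y => B y t k)
        (2 * pdx u x t * U x t k + 2 * u x t * pdxV U x t k) x := by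
      have := (h1.const_mul (2:ℝ)).mul (pdxV_hasDerivAt hU x t k)
      convert this using 1 <;> rfl
    exact h.deriv
  intro x t
  rw [hQc] at hQQ ⊢
  rw [hQQ]
  rw [pdtM_comb e u U hu hU]
  rw [pdxM_comb e u U hu hU, pdxM_comb e (pdx u) (pdxV U) (smooth2_pdx hu) (smooth2V_pdxV hU),
    pdxM_comb e (pdx (pdx u)) (pdxV (pdxV U)) (smooth2_pdx (smooth2_pdx hu))
      (smooth2V_pdxV (smooth2V_pdxV hU))]
  rw [pdxM_comb e A B hAsm hBsm]
  -- now everything is in `comb` form; finish entrywise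
  show comb e (pdt u) (pdtV U) x t
    = comb e (pdx (pdx (pdx u))) (pdxV (pdxV (pdxV U))) x t + (3:ℝ) • comb e (pdx A) (pdxV B) x t
  ext i j
  simp only [comb_entry, Matrix.add_apply, Matrix.smul_apply, smul_eq_mul]
  rw [heq1 x t, hA x t]
  simp only [heq2, hB]
  simp only [add_mul, mul_add, sub_mul, Finset.sum_add_distrib, Finset.mul_sum]
  ring_nf
end
end

section
/- Let n be a positive integer and e₁,…,e_N be n×n real matrices with eᵢeⱼ + eⱼeᵢ = -2δᵢⱼ𝟏. Let u : ℝ × ℝ → ℝ and U : ℝ × ℝ → ℝ^N be smooth solutions of u_t = u_{xxx} - 6u²u_x + 6u_x⟨U,U⟩ + 12u⟨U,U_x⟩ and U_t = U_{xxx} - 12uu_x U - 6u²U_x + 6⟨U,U⟩U_x. Then Q := u·𝟏 + Σ_{j=1}^{N} U_j·e_j satisfies the matrix mKdV equation Q_t = Q_{xxx} - 3(Q_x Q² + Q² Q_x). -/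
noncomputable section

/- ======================= auxiliary lemmas ======================= -/

lemma smooth2.diffx {f : ℝ → ℝ → ℝ} (hf : smooth2 f) (t : ℝ) :
    Differentiable ℝ (fun y => f y t) :=
  by have := (hf.differentiable (by simp)).comp (differentiable_id.prodMk (differentiable_const t)); exact this

lemma smooth2.difft {f : ℝ → ℝ → ℝ} (hf : smooth2 f) (x : ℝ) :
    Differentiable ℝ (fun s => f x s) :=
  by have := (hf.differentiable (by simp)).comp ((differentiable_const x).prodMk differentiable_id); exact this

lemma smooth2.pdx_eq {f : ℝ → ℝ → ℝ} (hf : smooth2 f) (x t : ℝ) :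
    pdx f x t = fderiv ℝ (fun p : ℝ × ℝ => f p.1 p.2) (x, t) (1, 0) := by
  have hc : HasDerivAt (fun y : ℝ => (y, t)) ((1 : ℝ), (0 : ℝ)) x :=
    (hasDerivAt_id x).prodMk (hasDerivAt_const x t)
  exact (((hf.differentiable (by simp) (x, t)).hasFDerivAt).comp_hasDerivAt x hc).deriv

lemma smooth2.pdx {f : ℝ → ℝ → ℝ} (hf : smooth2 f) : smooth2 (_root_.pdx f) := by
  have hfun : (fun p : ℝ × ℝ => _root_.pdx f p.1 p.2)
      = fun p : ℝ × ℝ => fderiv ℝ (fun q : ℝ × ℝ => f q.1 q.2) p ((1 : ℝ), (0 : ℝ)) := by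
    funext p
    exact hf.pdx_eq p.1 p.2
  rw [smooth2, hfun]
  exact (hf.fderiv_right (by simp)).clm_apply contDiff_const

lemma smooth2V.pdxV {N : ℕ} {U : ℝ → ℝ → Fin N → ℝ} (hU : smooth2V U) :
    smooth2V (_root_.pdxV U) := fun i =>
  smooth2.pdx (f := fun x t => U x t i) (hU i)

/-- the linear combination Σ vⱼ eⱼ -/
def Sm {n N : ℕ} (e : Fin N → Matrix (Fin n) (Fin n) ℝ) (v : Fin N → ℝ) :
    Matrix (Fin n) (Fin n) ℝ := ∑ j, v j • e j

section MatAlg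
variable {n N : ℕ} {e : Fin N → Matrix (Fin n) (Fin n) ℝ}

lemma Sm_expand (v w : Fin N → ℝ) :
    Sm e v * Sm e w = ∑ i, ∑ j, (v i * w j) • (e i * e j) := by
  unfold Sm
  rw [Finset.sum_mul_sum]
  refine Finset.sum_congr rfl fun i _ => Finset.sum_congr rfl fun j _ => ?_
  rw [smul_mul_smul_comm]

lemma Sm_anticomm
    (he : ∀ i j, e i * e j + e j * e i =
      if i = j then (-2 : ℝ) • (1 : Matrix (Fin n) (Fin n) ℝ) else 0)
    (v w : Fin N → ℝ) :
    Sm e v * Sm e w + Sm e w * Sm e v = (-2 * ∑ i, v i * w i) • 1 := by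
  rw [Sm_expand, Sm_expand]
  rw [Finset.sum_comm (s := Finset.univ) (t := Finset.univ)
    (f := fun i j => (w i * v j) • (e i * e j))]
  rw [← Finset.sum_add_distrib]
  have hrow : ∀ i : Fin N, ((∑ j, (v i * w j) • (e i * e j)) + ∑ j, (w j * v i) • (e j * e i))
      = (v i * w i) • ((-2 : ℝ) • (1 : Matrix (Fin n) (Fin n) ℝ)) := by
    intro i
    rw [← Finset.sum_add_distrib]
    have h2 : ∀ j : Fin N, (v i * w j) • (e i * e j) + (w j * v i) • (e j * e i)
        = (v i * w j) • (if i = j then (-2 : ℝ) • (1 : Matrix (Fin n) (Fin n) ℝ) else 0) := by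
      intro j
      rw [← he i j, smul_add, mul_comm (w j) (v i)]
    simp only [h2, smul_ite, smul_zero]
    simp
  simp only [hrow]
  rw [← Finset.sum_smul, smul_smul]
  ring_nf

lemma Sm_sq (he : ∀ i j, e i * e j + e j * e i =
      if i = j then (-2 : ℝ) • (1 : Matrix (Fin n) (Fin n) ℝ) else 0)
    (v : Fin N → ℝ) :
    Sm e v * Sm e v = (-(∑ i, v i * v i)) • 1 := by
  have h2 : (2 : ℝ) • (Sm e v * Sm e v) = (-2 * ∑ i, v i * v i) • 1 := by
    rw [two_smul]; exact Sm_anticomm he v v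
  have := congrArg (fun M : Matrix (Fin n) (Fin n) ℝ => (2⁻¹ : ℝ) • M) h2
  simpa [smul_smul, neg_mul] using this

/-- square of a•1 + Sm e v -/
lemma Q_sq (he : ∀ i j, e i * e j + e j * e i =
      if i = j then (-2 : ℝ) • (1 : Matrix (Fin n) (Fin n) ℝ) else 0)
    (a : ℝ) (v : Fin N → ℝ) :
    (a • (1 : Matrix (Fin n) (Fin n) ℝ) + Sm e v) * (a • 1 + Sm e v)
      = (a ^ 2 - ∑ i, v i * v i) • 1 + (2 * a) • Sm e v := by
  rw [mul_add, add_mul, add_mul, Sm_sq he]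
  simp only [smul_mul_assoc, mul_smul_comm, one_mul, mul_one, smul_smul]
  match_scalars <;> ring

lemma prod_expand (he : ∀ i j, e i * e j + e j * e i =
      if i = j then (-2 : ℝ) • (1 : Matrix (Fin n) (Fin n) ℝ) else 0)
    (b c d : ℝ) (w v : Fin N → ℝ) :
    (b • (1 : Matrix (Fin n) (Fin n) ℝ) + Sm e w) * (c • 1 + d • Sm e v)
      + (c • (1 : Matrix (Fin n) (Fin n) ℝ) + d • Sm e v) * (b • 1 + Sm e w)
      = (2 * b * c - 2 * d * ∑ i, w i * v i) • 1 + (2 * c) • Sm e w + (2 * b * d) • Sm e v := by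
  have h := Sm_anticomm he w v
  have expand : (b • (1 : Matrix (Fin n) (Fin n) ℝ) + Sm e w) * (c • 1 + d • Sm e v)
      + (c • (1 : Matrix (Fin n) (Fin n) ℝ) + d • Sm e v) * (b • 1 + Sm e w)
      = (2 * b * c) • 1 + (2 * c) • Sm e w + (2 * b * d) • Sm e v
        + d • (Sm e w * Sm e v + Sm e v * Sm e w) := by
    simp only [mul_add, add_mul, smul_mul_assoc, mul_smul_comm, smul_smul, one_mul, mul_one,
      smul_add]
    module
  rw [expand, h, smul_smul]
  match_scalars <;> ring

lemma Sm_decomp (A B C : Fin N → ℝ) (p q r : ℝ) :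
    Sm e (fun i => A i + p * B i + q * C i + r * C i)
      = Sm e A + p • Sm e B + q • Sm e C + r • Sm e C := by
  have key : ∀ (c : ℝ) (D : Fin N → ℝ), (∑ j, (c * D j) • e j) = c • ∑ j, D j • e j := by
    intro c D
    rw [Finset.smul_sum]
    simp [smul_smul]
  unfold Sm
  simp only [add_smul, Finset.sum_add_distrib, key]

end MatAlg

/-- x-derivative of a matrix function of the form u•1 + Σ Uⱼ eⱼ -/
lemma pdxM_form {n N : ℕ} (e : Fin N → Matrix (Fin n) (Fin n) ℝ)
    {u : ℝ → ℝ → ℝ} {U : ℝ → ℝ → Fin N → ℝ} (hu : smooth2 u) (hU : smooth2V U)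
    {Q : ℝ → ℝ → Matrix (Fin n) (Fin n) ℝ}
    (hQ : ∀ x t, Q x t = u x t • (1 : Matrix (Fin n) (Fin n) ℝ) + Sm e (U x t)) :
    ∀ x t, pdxM Q x t = pdx u x t • (1 : Matrix (Fin n) (Fin n) ℝ) + Sm e (pdxV U x t) := by
  intro x t
  ext i j
  have h1 : (fun y => Q y t i j)
      = fun y => u y t * (1 : Matrix (Fin n) (Fin n) ℝ) i j + ∑ k, U y t k * e k i j := by
    funext y
    rw [hQ]
    simp [Sm, Matrix.sum_apply]
  have hd : HasDerivAt (fun y => u y t * (1 : Matrix (Fin n) (Fin n) ℝ) i j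
        + ∑ k, U y t k * e k i j)
      (pdx u x t * (1 : Matrix (Fin n) (Fin n) ℝ) i j + ∑ k, pdxV U x t k * e k i j) x := by
    refine HasDerivAt.add ?_ (HasDerivAt.fun_sum fun k _ => ?_)
    · exact ((hu.diffx t x).hasDerivAt).mul_const _
    · exact ((smooth2.diffx (f := fun x t => U x t k) (hU k) t x).hasDerivAt).mul_const _
  show deriv (fun y => Q y t i j) x = _
  rw [h1, hd.deriv]
  simp [Sm, Matrix.sum_apply]

/-- t-derivative of a matrix function of the form u•1 + Σ Uⱼ eⱼ -/
lemma pdtM_form {n N : ℕ} (e : Fin N → Matrix (Fin n) (Fin n) ℝ)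
    {u : ℝ → ℝ → ℝ} {U : ℝ → ℝ → Fin N → ℝ} (hu : smooth2 u) (hU : smooth2V U)
    {Q : ℝ → ℝ → Matrix (Fin n) (Fin n) ℝ}
    (hQ : ∀ x t, Q x t = u x t • (1 : Matrix (Fin n) (Fin n) ℝ) + Sm e (U x t)) :
    ∀ x t, pdtM Q x t = pdt u x t • (1 : Matrix (Fin n) (Fin n) ℝ) + Sm e (pdtV U x t) := by
  intro x t
  ext i j
  have h1 : (fun s => Q x s i j)
      = fun s => u x s * (1 : Matrix (Fin n) (Fin n) ℝ) i j + ∑ k, U x s k * e k i j := by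
    funext s
    rw [hQ]
    simp [Sm, Matrix.sum_apply]
  have hd : HasDerivAt (fun s => u x s * (1 : Matrix (Fin n) (Fin n) ℝ) i j
        + ∑ k, U x s k * e k i j)
      (pdt u x t * (1 : Matrix (Fin n) (Fin n) ℝ) i j + ∑ k, pdtV U x t k * e k i j) t := by
    refine HasDerivAt.add ?_ (HasDerivAt.fun_sum fun k _ => ?_)
    · exact ((hu.difft x t).hasDerivAt).mul_const _
    · exact ((smooth2.difft (f := fun x t => U x t k) (hU k) x t).hasDerivAt).mul_const _
  show deriv (fun s => Q x s i j) t = _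
  rw [h1, hd.deriv]
  simp [Sm, Matrix.sum_apply]

/-- the Jordan mKdV system reduces to the matrix mKdV equation
    `Q_t = Q_xxx - 3(Q_x Q² + Q² Q_x)` via `Q = u·𝟏 + Σ Uⱼ eⱼ`. -/
theorem stmt_8 {n N : ℕ} (hn : 0 < n) (e : Fin N → Matrix (Fin n) (Fin n) ℝ)
    (he : ∀ i j, e i * e j + e j * e i =
      if i = j then (-2 : ℝ) • (1 : Matrix (Fin n) (Fin n) ℝ) else 0)
    (u : ℝ → ℝ → ℝ) (U : ℝ → ℝ → Fin N → ℝ)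
    (hu : smooth2 u) (hU : smooth2V U)
    (heq1 : ∀ x t, pdt u x t = pdx (pdx (pdx u)) x t
      - 6 * (u x t) ^ 2 * pdx u x t + 6 * pdx u x t * ip U U x t
      + 12 * u x t * ip U (pdxV U) x t)
    (heq2 : ∀ x t i, pdtV U x t i = pdxV (pdxV (pdxV U)) x t i
      - 12 * u x t * pdx u x t * U x t i - 6 * (u x t) ^ 2 * pdxV U x t i
      + 6 * ip U U x t * pdxV U x t i)
    (Q : ℝ → ℝ → Matrix (Fin n) (Fin n) ℝ)
    (hQ : ∀ x t, Q x t = u x t • (1 : Matrix (Fin n) (Fin n) ℝ) + ∑ j, U x t j • e j) :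
    ∀ x t, pdtM Q x t = pdxM (pdxM (pdxM Q)) x t
      - (3 : ℝ) • (pdxM Q x t * (Q x t * Q x t) + (Q x t * Q x t) * pdxM Q x t) := by
  have hQ' : ∀ x t, Q x t = u x t • (1 : Matrix (Fin n) (Fin n) ℝ) + Sm e (U x t) := hQ
  have h1 := pdxM_form e hu hU hQ'
  have h2 := pdxM_form e hu.pdx hU.pdxV h1
  have h3 := pdxM_form e hu.pdx.pdx hU.pdxV.pdxV h2
  have ht := pdtM_form e hu hU hQ'
  intro x t
  rw [ht x t, h3 x t, h1 x t, hQ' x t, Q_sq he]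
  rw [prod_expand he]
  -- rewrite the time derivatives using the PDE system
  have hUt : pdtV U x t = fun i => pdxV (pdxV (pdxV U)) x t i
      + (-(12 * u x t * pdx u x t)) * U x t i + (-(6 * (u x t) ^ 2)) * pdxV U x t i
      + (6 * ip U U x t) * pdxV U x t i := by
    funext i
    rw [heq2 x t i]
    ring
  rw [heq1 x t, hUt, Sm_decomp]
  have hip1 : ip U U x t = ∑ i, U x t i * U x t i := rfl
  have hip2 : ip U (pdxV U) x t = ∑ i, U x t i * pdxV U x t i := rfl
  have hcomm : ∑ i, pdxV U x t i * U x t i = ∑ i, U x t i * pdxV U x t i :=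
    Finset.sum_congr rfl fun i _ => mul_comm _ _
  rw [hip1, hip2, hcomm]
  match_scalars <;> ring
end
end
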